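/- Let T be an LR tableau of shape λ/μ and weight ν on [2n] with left companion chain μ = μ^{(2n)} ⊇ ⋯ ⊇ μ^{(1)}. Suppose T(ℓ(μ)+1,1) = s ∈ [ℓ(μ)] with s even. Then ℓ(μ^{(2n)}) > ℓ(μ^{(2n−1)}) > ⋯ > ℓ(μ^{(2n−s+1)}) = ℓ(μ^{(2n−s)}). -/

import Mathlib

/-- A partition: weakly decreasing, eventually-zero sequence of naturals.
`part k` is the `k`-th part (1-indexed; `part 0` is a dummy value ≥ `part 1`). -/
structure YPart where
  part : ℕ → ℕ
  antitone : ∀ i j : ℕ, i ≤ j → part j ≤ part i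
  evZero : ∃ N, ∀ k, N ≤ k → part k = 0

/-- The number of nonzero parts (length) of a partition. -/
noncomputable def YPart.len (p : YPart) : ℕ := sSup {k | 1 ≤ k ∧ p.part k ≠ 0}

/-- Containment of partitions (Young diagrams). -/
def YPart.Sub (m l : YPart) : Prop := ∀ k, m.part k ≤ l.part k

/-- A partition is even if `ν_{2i-1} = ν_{2i}` for all `i ≥ 1`. -/
def YPart.IsEven (p : YPart) : Prop := ∀ i : ℕ, p.part (2*i+1) = p.part (2*i+2)

/-- The empty partition. -/
def YPart.zero : YPart := ⟨fun _ => 0, fun _ _ _ => Nat.le_refl 0, ⟨0, fun _ _ => rfl⟩⟩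

/-- Cell `(k,j)` (1-indexed, matrix style) lies in the skew shape `λ/μ`. -/
def InShape (l m : YPart) (k j : ℕ) : Prop :=
  1 ≤ k ∧ m.part k < j ∧ j ≤ l.part k

/-- A semistandard skew tableau of shape `λ/μ` with entries in `[N] = {1,…,N}`;
entries outside the skew shape (including the cells of `μ`) are normalized to `0`. -/
structure IsSSYT (l m : YPart) (N : ℕ) (T : ℕ → ℕ → ℕ) : Prop where
  pos : ∀ k j, InShape l m k j → 1 ≤ T k j ∧ T k j ≤ N
  rowLe : ∀ k j, InShape l m k j → InShape l m k (j+1) → T k j ≤ T k (j+1)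
  colLt : ∀ k j, InShape l m k j → InShape l m (k+1) j → T k j < T (k+1) j
  outside : ∀ k j, ¬ InShape l m k j → T k j = 0

/-- The number of cells of `λ/μ` with entry `i` whose position satisfies `P`. -/
noncomputable def cnt (l m : YPart) (T : ℕ → ℕ → ℕ) (P : ℕ → ℕ → Prop) (i : ℕ) : ℕ :=
  {c : ℕ × ℕ | InShape l m c.1 c.2 ∧ T c.1 c.2 = i ∧ P c.1 c.2}.ncard

/-- A Littlewood–Richardson tableau of shape `λ/μ` and weight `ν` on `[N]`:
a semistandard skew tableau whose reverse row reading word (rows right to left,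
top to bottom) is Yamanouchi of weight `ν`.  The Yamanouchi condition is stated
on all prefixes of the reverse row word: a prefix ends at a cell `(k,j)` and
consists of all cells in earlier rows together with the cells `(k,b)`, `b ≥ j`. -/
structure IsLR (l m nu : YPart) (N : ℕ) (T : ℕ → ℕ → ℕ) : Prop where
  ssyt : IsSSYT l m N T
  weight : ∀ i, 1 ≤ i → cnt l m T (fun _ _ => True) i = nu.part i
  yam : ∀ k j i, 1 ≤ i →
    cnt l m T (fun a b => a < k ∨ (a = k ∧ j ≤ b)) (i+1) ≤
    cnt l m T (fun a b => a < k ∨ (a = k ∧ j ≤ b)) i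

/-- The Sundaram property: every odd entry `2i+1` lies in row `n+i` or above. -/
def Sundaram (n : ℕ) (l m : YPart) (T : ℕ → ℕ → ℕ) : Prop :=
  ∀ k j i, InShape l m k j → T k j = 2*i + 1 → k ≤ n + i

/-- A Sundaram violation occurs in row `k`: some odd entry `2i+1` appears in row
`k` with `k > n+i`. -/
def SundViolRow (n : ℕ) (l m : YPart) (T : ℕ → ℕ → ℕ) (k : ℕ) : Prop :=
  ∃ j i, InShape l m k j ∧ T k j = 2*i + 1 ∧ n + i < k

/-- The symplectic (King/Kwon) condition on a straight-shape tableau `G` of shape `g`: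
`G(k,1) ≥ 2k−1` for every row `k` of `g`. -/
def IsSymplectic (g : YPart) (G : ℕ → ℕ → ℕ) : Prop :=
  ∀ k, 1 ≤ k → k ≤ g.len → 2*k - 1 ≤ G k 1

/-- Row `i` of the partition `μ^{(mm)}` in the left-companion chain of `T`:
with `mm = 2n - r + 1`, the partition `μ^{(mm)}` is the shape occupied by the
entries `< r` (including the `0`-entries on the cells of `μ`) in rows
`r, r+1, …, 2n` of `T`; its `i`-th row comes from row `2n - mm + i` of `T`. -/
noncomputable def compShape (l : YPart) (T : ℕ → ℕ → ℕ) (n mm i : ℕ) : ℕ :=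
  {j : ℕ | 1 ≤ j ∧ j ≤ l.part (2*n - mm + i) ∧ T (2*n - mm + i) j < 2*n - mm + 1}.ncard

/-- The length (number of nonzero rows) of a shape given by its row-length function. -/
noncomputable def shapeLen (f : ℕ → ℕ) : ℕ := sSup {i | 1 ≤ i ∧ f i ≠ 0}

/-- The entry of the left companion tableau `G_μ(T)` in cell `(k,j)`:
the least `mm` such that `(k,j)` is a cell of `μ^{(mm)}`. -/
noncomputable def leftCompanion (l : YPart) (T : ℕ → ℕ → ℕ) (n k j : ℕ) : ℕ :=
  sInf {mm | j ≤ compShape l T n mm k}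


/-!
Row `i` of `μ^{(2n-d)}` consists of the entries `≤ d` of row `d + i` of `T`, so it is nonempty
exactly when `T(d+i, 1) ≤ d`. The first `ℓ(μ)` rows of `T` start with a cell of `μ` (entry `0`),
row `ℓ(μ)+1` starts with `s`, and by column strictness every lower row starts with an entry `> s`.
Hence for `d ≤ s` the length of `μ^{(2n-d)}` is `ℓ(μ) - d` when `d < s` and `ℓ(μ) + 1 - s` when
`d = s`.
-/

namespace YPart

variable (p : YPart)

lemma bddAbove_support : BddAbove {k | 1 ≤ k ∧ p.part k ≠ 0} := by
  obtain ⟨N, hN⟩ := p.evZero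
  exact ⟨N, fun k hk => by_contra fun h => hk.2 (hN k (by omega))⟩

variable {p}

lemma part_eq_zero_of_len_lt {k : ℕ} (h : p.len < k) : p.part k = 0 := by
  by_contra hne
  have : k ≤ p.len := le_csSup p.bddAbove_support ⟨by omega, hne⟩
  omega

lemma one_le_part_of_le_len {k : ℕ} (hk : k ≤ p.len) (hlen : 1 ≤ p.len) : 1 ≤ p.part k := by
  have hne : {k | 1 ≤ k ∧ p.part k ≠ 0}.Nonempty := by
    by_contra he
    rw [Set.not_nonempty_iff_eq_empty] at he
    have : p.len = 0 := by rw [YPart.len, he, csSup_empty]; rfl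
    omega
  have hlast : p.part p.len ≠ 0 := (Nat.sSup_mem hne p.bddAbove_support).2
  have := p.antitone k p.len hk
  omega

end YPart

lemma shapeLen_eq_of_ne_zero_iff {f : ℕ → ℕ} {L : ℕ} (h : ∀ i, 1 ≤ i → (f i ≠ 0 ↔ i ≤ L)) :
    shapeLen f = L := by
  have hset : {i | 1 ≤ i ∧ f i ≠ 0} = Set.Icc 1 L := by
    ext i
    simp only [Set.mem_ofPred_eq, Set.mem_Icc]
    exact ⟨fun ⟨hi, hf⟩ => ⟨hi, (h i hi).1 hf⟩, fun ⟨hi, hiL⟩ => ⟨hi, (h i hi).2 hiL⟩⟩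
  rw [shapeLen, hset]
  rcases Nat.eq_zero_or_pos L with rfl | hL
  · rw [Set.Icc_eq_empty (by omega), csSup_empty]; rfl
  · exact csSup_Icc hL

namespace IsSSYT

variable {lam mu : YPart} {N : ℕ} {T : ℕ → ℕ → ℕ}

lemma apply_le_apply_of_le (hT : IsSSYT lam mu N T) {k j₁ j₂ : ℕ} (h₁ : InShape lam mu k j₁)
    (h₂ : j₂ ≤ lam.part k) (h₁₂ : j₁ ≤ j₂) : T k j₁ ≤ T k j₂ := by
  obtain ⟨hk, hmu, -⟩ := h₁
  induction j₂, h₁₂ using Nat.le_induction with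
  | base => exact le_rfl
  | succ j hj ih =>
    exact (ih (by omega)).trans
      (hT.rowLe k j ⟨hk, by omega, by omega⟩ ⟨hk, by omega, h₂⟩)

/-- Cells of `μ` carry the entry `0`, so the first entry of a row is its least. -/
lemma apply_one_le (hT : IsSSYT lam mu N T) {k j : ℕ} (hj : 1 ≤ j)
    (hjl : j ≤ lam.part k) : T k 1 ≤ T k j := by
  by_cases hcell : InShape lam mu k 1
  · exact hT.apply_le_apply_of_le hcell hjl hj
  · rw [hT.outside k 1 hcell]
    exact Nat.zero_le _

lemma ncard_row_lt_ne_zero_iff (hT : IsSSYT lam mu N T) (k r : ℕ) :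
    {j : ℕ | 1 ≤ j ∧ j ≤ lam.part k ∧ T k j < r}.ncard ≠ 0 ↔ 1 ≤ lam.part k ∧ T k 1 < r := by
  constructor
  · intro h
    obtain ⟨j, hj, hjl, hjr⟩ := Set.nonempty_of_ncard_ne_zero h
    exact ⟨hj.trans hjl, (hT.apply_one_le hj hjl).trans_lt hjr⟩
  · rintro ⟨hl, hr⟩
    have hfin : {j : ℕ | 1 ≤ j ∧ j ≤ lam.part k ∧ T k j < r}.Finite :=
      (Set.finite_Icc 1 (lam.part k)).subset fun j hj => ⟨hj.1, hj.2.1⟩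
    exact ((Set.ncard_pos hfin).mpr ⟨1, le_rfl, hl, hr⟩).ne'

lemma compShape_ne_zero_iff (hT : IsSSYT lam mu N T) (n mm i : ℕ) :
    compShape lam T n mm i ≠ 0 ↔
      1 ≤ lam.part (2*n - mm + i) ∧ T (2*n - mm + i) 1 < 2*n - mm + 1 :=
  hT.ncard_row_lt_ne_zero_iff _ _

lemma add_sub_le_apply_one (hT : IsSSYT lam mu N T) {k : ℕ} (hk : mu.len + 1 ≤ k)
    (hl : 1 ≤ lam.part k) : T (mu.len + 1) 1 + (k - (mu.len + 1)) ≤ T k 1 := by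
  induction k, hk using Nat.le_induction with
  | base => simp
  | succ k hk ih =>
    have hl' : 1 ≤ lam.part k := hl.trans (lam.antitone k (k + 1) (by omega))
    have hmu : mu.part k = 0 := YPart.part_eq_zero_of_len_lt (by omega)
    have hmu' : mu.part (k + 1) = 0 := YPart.part_eq_zero_of_len_lt (by omega)
    have := hT.colLt k 1 ⟨by omega, by omega, hl'⟩ ⟨by omega, by omega, hl⟩
    have := ih hl'
    omega

variable {s : ℕ} (hT : IsSSYT lam mu N T) (hcell : InShape lam mu (mu.len + 1) 1)
  (hval : T (mu.len + 1) 1 = s)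
include hT hcell hval

lemma first_col_lt_succ_iff {d k : ℕ} (hd : d ≤ s) (hk : 1 ≤ k) :
    1 ≤ lam.part k ∧ T k 1 < d + 1 ↔ k ≤ mu.len ∨ (k = mu.len + 1 ∧ d = s) := by
  obtain ⟨-, -, hcell_l⟩ := hcell
  rcases lt_trichotomy k (mu.len + 1) with hlt | rfl | hgt
  · have hl : 1 ≤ lam.part k := hcell_l.trans (lam.antitone _ _ hlt.le)
    have hmu : 1 ≤ mu.part k := YPart.one_le_part_of_le_len (by omega) (by omega)
    have hzero : T k 1 = 0 := hT.outside k 1 fun h => by have := h.2.1; omega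
    omega
  · rw [hval]
    omega
  · constructor
    · rintro ⟨hl, hlt⟩
      have := hT.add_sub_le_apply_one hgt.le hl
      omega
    · omega

lemma shapeLen_compShape (n mm : ℕ) (hd : 2*n - mm ≤ s) :
    shapeLen (compShape lam T n mm) =
      (if 2*n - mm = s then mu.len + 1 else mu.len) - (2*n - mm) := by
  refine shapeLen_eq_of_ne_zero_iff fun i hi => ?_
  rw [hT.compShape_ne_zero_iff n mm i, hT.first_col_lt_succ_iff hcell hval hd (by omega)]
  split_ifs <;> omega

end IsSSYT

theorem stmt19_general (n : ℕ) (lam mu nu : YPart)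
    (T : ℕ → ℕ → ℕ) (hT : IsLR lam mu nu (2*n) T)
    (s : ℕ) (hcell : InShape lam mu (mu.len + 1) 1)
    (hval : T (mu.len + 1) 1 = s) (hs2 : s ≤ mu.len) :
    (∀ mm, 2*n - s + 2 ≤ mm → mm ≤ 2*n →
        shapeLen (compShape lam T n (mm-1)) < shapeLen (compShape lam T n mm)) ∧
    shapeLen (compShape lam T n (2*n - s + 1)) =
      shapeLen (compShape lam T n (2*n - s)) := by
  have hs : 1 ≤ s ∧ s ≤ 2*n := hval ▸ hT.ssyt.pos _ _ hcell
  have hlen := hT.ssyt.shapeLen_compShape hcell hval n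
  refine ⟨fun mm h₁ h₂ => ?_, ?_⟩
  · rw [hlen mm (by omega), hlen (mm - 1) (by omega)]
    split_ifs <;> omega
  · rw [hlen _ (by omega), hlen _ (by omega)]
    split_ifs <;> omega

/-- If `T(ℓ(μ)+1,1) = s ∈ [ℓ(μ)]` with `s` even, then the lengths
of the left-companion chain satisfy
`ℓ(μ^{(2n)}) > ℓ(μ^{(2n−1)}) > ⋯ > ℓ(μ^{(2n−s+1)}) = ℓ(μ^{(2n−s)})`. -/
theorem stmt19 (n : ℕ) (lam mu nu : YPart) (hl : lam.len ≤ 2*n)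
    (hsub : mu.Sub lam) (T : ℕ → ℕ → ℕ) (hT : IsLR lam mu nu (2*n) T)
    (s : ℕ) (hcell : InShape lam mu (mu.len + 1) 1)
    (hval : T (mu.len + 1) 1 = s) (hs1 : 1 ≤ s) (hs2 : s ≤ mu.len)
    (hse : Even s) :
    (∀ mm, 2*n - s + 2 ≤ mm → mm ≤ 2*n →
        shapeLen (compShape lam T n (mm-1)) < shapeLen (compShape lam T n mm)) ∧
    shapeLen (compShape lam T n (2*n - s + 1)) =
      shapeLen (compShape lam T n (2*n - s)) :=
  stmt19_general n lam mu nu T hT s hcell hval hs2
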